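/- arXiv:2506.06503 — 6 statements merged into one kernel-verified Lean document; each statement's English description precedes it below -/
import Mathlib

section
/- Let X and Y be totally disconnected locally compact Hausdorff spaces. Then the canonical linear map γ : C_c^∞(X) ⊗ C_c^∞(Y) → C_c^∞(X × Y), defined by γ(f ⊗ g)(x,y) = f(x)g(y), is a linear isomorphism. -/
/-!
A locally constant compactly supported function takes finitely many values, so it is a finite
combination of indicators of compact open sets. In `X × Y` the compact open rectangles `K ×ˢ L`
form a basis closed under intersection, so a compact open set is a finite union of them and
inclusion–exclusion writes its indicator as a combination of the functions `γ (1_K ⊗ 1_L)`.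
For injectivity, expand a tensor as `∑ fᵢ ⊗ bᵢ` over a basis `(bᵢ)` of `C_c^∞(Y)`: the image
restricted to `{x} × Y` is `∑ fᵢ(x) bᵢ`, which vanishes only if every `fᵢ(x)` does.
-/

open TensorProduct

theorem HasCompactSupport.add' {Z : Type*} [TopologicalSpace Z] {f g : Z → ℂ}
    (hf : HasCompactSupport f) (hg : HasCompactSupport g) : HasCompactSupport (f + g) :=
  (hf.union hg).of_isClosed_subset isClosed_closure
    ((closure_mono (Function.support_add f g)).trans (le_of_eq closure_union))

theorem IsLocallyConstant.csmul {Z : Type*} [TopologicalSpace Z] {f : Z → ℂ} (c : ℂ)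
    (hf : IsLocallyConstant f) : IsLocallyConstant (c • f) := by
  have : c • f = fun x => c * f x := by funext x; simp
  rw [this]
  exact hf.comp (c * ·)

/-- The space `C_c^∞(Z)` of locally constant compactly supported `ℂ`-valued functions,
as a `ℂ`-submodule of the function space. -/
noncomputable def Cc (Z : Type) [TopologicalSpace Z] : Submodule ℂ (Z → ℂ) where
  carrier := {f | IsLocallyConstant f ∧ HasCompactSupport f}
  add_mem' := fun hf hg => ⟨hf.1.add hg.1, hf.2.add' hg.2⟩
  zero_mem' := ⟨IsLocallyConstant.const 0, by
    simp only [HasCompactSupport, tsupport]; simpa using isCompact_empty⟩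
  smul_mem' := fun c f hf =>
    ⟨IsLocallyConstant.csmul c hf.1, hf.2.mono (Function.support_const_smul_subset c f)⟩

/-- The canonical bilinear map `C_c^∞(X) × C_c^∞(Y) → (X × Y → ℂ)`,
`(f, g) ↦ ((x,y) ↦ f(x)g(y))`. -/
noncomputable def gammaBil (X Y : Type) [TopologicalSpace X] [TopologicalSpace Y] :
    Cc X →ₗ[ℂ] Cc Y →ₗ[ℂ] ((X × Y) → ℂ) :=
  LinearMap.mk₂ ℂ (fun f g => fun p => (f : X → ℂ) p.1 * (g : Y → ℂ) p.2)
    (by intros f₁ f₂ g; funext p; simp [add_mul])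
    (by intros c f g; funext p; simp [smul_eq_mul]; ring)
    (by intros f g₁ g₂; funext p; simp [mul_add])
    (by intros c f g; funext p; simp [smul_eq_mul]; ring)

/-- The canonical linear map `γ : C_c^∞(X) ⊗ C_c^∞(Y) → (X × Y → ℂ)`. -/
noncomputable def gammaMap (X Y : Type) [TopologicalSpace X] [TopologicalSpace Y] :
    (Cc X ⊗[ℂ] Cc Y) →ₗ[ℂ] ((X × Y) → ℂ) :=
  TensorProduct.lift (gammaBil X Y)

open TopologicalSpace

theorem isTopologicalBasis_isClopen_isCompact {Z : Type*} [TopologicalSpace Z] [T2Space Z]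
    [LocallyCompactSpace Z] [TotallyDisconnectedSpace Z] :
    IsTopologicalBasis {K : Set Z | IsClopen K ∧ IsCompact K} := by
  refine isTopologicalBasis_of_isOpen_of_nhds (fun K hK => hK.1.isOpen) fun z U hzU hU => ?_
  obtain ⟨s, hs, hzs, hsU⟩ := exists_compact_subset hU hzU
  obtain ⟨K, hK, hzK, hKs⟩ :=
    loc_compact_Haus_tot_disc_of_zero_dim.exists_subset_of_mem_open hzs isOpen_interior
  have hKs' : K ⊆ s := hKs.trans interior_subset
  exact ⟨K, ⟨hK, hs.of_isClosed_subset hK.isClosed hKs'⟩, hzK, hKs'.trans hsU⟩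

theorem IsLocallyConstant.finite_range_of_hasCompactSupport {Z R : Type*} [TopologicalSpace Z]
    [Zero R] {f : Z → R} (hf : IsLocallyConstant f) (hfc : HasCompactSupport f) :
    (Set.range f).Finite := by
  have : CompactSpace (tsupport f) := isCompact_iff_compactSpace.mp hfc
  have hK := (hf.comp_continuous (continuous_subtype_val (p := (· ∈ tsupport f)))).range_finite
  rw [Set.range_comp, Subtype.range_coe] at hK
  exact (hK.insert 0).subset (range_subset_insert_image_tsupport f)

theorem Finset.sum_smul_indicator_fiber {Z R : Type*} [Semiring R] (f : Z → R) (t : Finset R)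
    (ht : Set.range f ⊆ t) : ∑ c ∈ t, c • (f ⁻¹' {c}).indicator 1 = f := by
  funext z
  rw [Finset.sum_apply, Finset.sum_eq_single_of_mem (f z) (ht ⟨z, rfl⟩)]
  · simp
  · intro c _ hc
    simp [Set.indicator_of_notMem (show z ∉ f ⁻¹' {c} from Ne.symm hc)]

theorem AddSubgroup.indicator_one_biUnion_mem {Z R ι : Type*} [Ring R] (M : AddSubgroup (Z → R))
    {𝒮 : Set (Set Z)} (h_inter : ∀ A ∈ 𝒮, ∀ B ∈ 𝒮, A ∩ B ∈ 𝒮)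
    (h_mem : ∀ A ∈ 𝒮, A.indicator 1 ∈ M) {s : Set ι} (hs : s.Finite) (A : ι → Set Z)
    (hA : ∀ i ∈ s, A i ∈ 𝒮) : (⋃ i ∈ s, A i).indicator 1 ∈ M := by
  induction s, hs using Set.Finite.induction_on generalizing A with
  | empty => rw [Set.biUnion_empty, Set.indicator_empty]; exact M.zero_mem
  | @insert a s _ _ ih =>
    have hAa := hA a (Set.mem_insert a s)
    have hAs : ∀ i ∈ s, A i ∈ 𝒮 := fun i hi => hA i (Set.mem_insert_of_mem a hi)
    rw [Set.biUnion_insert, eq_sub_of_add_eq (Set.indicator_union_add_inter (1 : Z → R) (A a) _),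
      Set.inter_iUnion₂]
    exact M.sub_mem (M.add_mem (h_mem _ hAa) (ih A hAs))
      (ih (fun i => A a ∩ A i) fun i hi => h_inter _ hAa _ (hAs i hi))

theorem indicator_one_mem_Cc {Z : Type} [TopologicalSpace Z] {K : Set Z} (hK : IsClopen K)
    (hKc : IsCompact K) : K.indicator 1 ∈ Cc Z :=
  ⟨LocallyConstant.coe_charFn (Y := ℂ) hK ▸ (LocallyConstant.charFn ℂ hK).isLocallyConstant,
    HasCompactSupport.intro' hKc hK.isClosed fun _ hz => Set.indicator_of_notMem hz _⟩

theorem mul_fst_snd_mem_Cc {X Y : Type} [TopologicalSpace X] [TopologicalSpace Y] {f : X → ℂ}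
    {g : Y → ℂ} (hf : f ∈ Cc X) (hg : g ∈ Cc Y) :
    (fun p : X × Y => f p.1 * g p.2) ∈ Cc (X × Y) := by
  refine ⟨(hf.1.comp_continuous continuous_fst).mul (hg.1.comp_continuous continuous_snd),
    HasCompactSupport.intro' (hf.2.prod hg.2) ((isClosed_tsupport f).prod (isClosed_tsupport g)) ?_⟩
  rintro ⟨x, y⟩ hxy
  by_cases hx : x ∈ tsupport f
  · simp [image_eq_zero_of_notMem_tsupport fun hy => hxy ⟨hx, hy⟩]
  · simp [image_eq_zero_of_notMem_tsupport hx]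

section

variable {X Y : Type} [TopologicalSpace X] [TopologicalSpace Y]

theorem gammaMap_tmul (f : Cc X) (g : Cc Y) :
    gammaMap X Y (f ⊗ₜ g) = fun p => (f : X → ℂ) p.1 * (g : Y → ℂ) p.2 := rfl

theorem range_gammaMap_le : LinearMap.range (gammaMap X Y) ≤ Cc (X × Y) := by
  rintro _ ⟨t, rfl⟩
  induction t using TensorProduct.induction_on with
  | zero => simp
  | tmul f g => exact mul_fst_snd_mem_Cc f.2 g.2
  | add a b ha hb => simpa using add_mem ha hb

theorem indicator_one_prod_mem_range_gammaMap {K : Set X} {L : Set Y} (hK : IsClopen K)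
    (hKc : IsCompact K) (hL : IsClopen L) (hLc : IsCompact L) :
    (K ×ˢ L).indicator 1 ∈ LinearMap.range (gammaMap X Y) :=
  ⟨⟨_, indicator_one_mem_Cc hK hKc⟩ ⊗ₜ ⟨_, indicator_one_mem_Cc hL hLc⟩, by
    funext p; exact Set.indicator_prod_one.symm⟩

theorem gammaMap_injective : Function.Injective (gammaMap X Y) := by
  classical
  refine (injective_iff_map_eq_zero _).mpr fun t ht => ?_
  let b := Module.Basis.ofVectorSpace ℂ (Cc Y)
  set c := TensorProduct.equivFinsuppOfBasisRight b t
  have ht_eq : t = c.sum fun i f => f ⊗ₜ b i := by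
    rw [← TensorProduct.equivFinsuppOfBasisRight_symm_apply, LinearEquiv.symm_apply_apply]
  suffices c = 0 by simpa [this] using ht_eq
  ext i x
  have hx :
      Finsupp.linearCombination ℂ b (c.mapRange (fun f : Cc X => (f : X → ℂ) x) rfl) = 0 := by
    rw [Finsupp.linearCombination_apply, Finsupp.sum_mapRange_index (by simp)]
    ext y
    have := congrFun ht (x, y)
    rw [ht_eq, map_finsuppSum] at this
    simpa [gammaMap_tmul, Finsupp.sum, Finset.sum_apply] using this
  simpa using congr($(linearIndependent_iff.mp b.linearIndependent _ hx) i)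

variable [T2Space X] [LocallyCompactSpace X] [TotallyDisconnectedSpace X]
  [T2Space Y] [LocallyCompactSpace Y] [TotallyDisconnectedSpace Y]

theorem indicator_one_mem_range_gammaMap {W : Set (X × Y)} (hW : IsOpen W) (hWc : IsCompact W) :
    W.indicator 1 ∈ LinearMap.range (gammaMap X Y) := by
  let 𝒮 : Set (Set (X × Y)) :=
    Set.image2 (· ×ˢ ·) {K | IsClopen K ∧ IsCompact K} {L | IsClopen L ∧ IsCompact L}
  have h𝒮 : IsTopologicalBasis 𝒮 :=
    isTopologicalBasis_isClopen_isCompact.prod isTopologicalBasis_isClopen_isCompact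
  obtain ⟨s, hs, rfl⟩ := eq_finite_iUnion_of_isTopologicalBasis_of_isCompact_open
    (fun R : 𝒮 => (R : Set (X × Y))) (by simpa using h𝒮) W hWc hW
  refine (LinearMap.range (gammaMap X Y)).toAddSubgroup.indicator_one_biUnion_mem ?_ ?_ hs _
    fun R _ => R.2
  · rintro _ ⟨K, hK, L, hL, rfl⟩ _ ⟨K', hK', L', hL', rfl⟩
    rw [Set.prod_inter_prod]
    exact ⟨_, ⟨hK.1.inter hK'.1, hK.2.inter_right hK'.1.isClosed⟩,
      _, ⟨hL.1.inter hL'.1, hL.2.inter_right hL'.1.isClosed⟩, rfl⟩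
  · rintro _ ⟨K, hK, L, hL, rfl⟩
    exact indicator_one_prod_mem_range_gammaMap hK.1 hK.2 hL.1 hL.2

theorem Cc_le_range_gammaMap : Cc (X × Y) ≤ LinearMap.range (gammaMap X Y) := by
  rintro f ⟨hf, hfc⟩
  have hfin := hf.finite_range_of_hasCompactSupport hfc
  rw [← Finset.sum_smul_indicator_fiber f hfin.toFinset (by simp)]
  refine Submodule.sum_mem _ fun c _ => ?_
  obtain rfl | hc := eq_or_ne c 0
  · simp
  have hfiber : f ⁻¹' {c} ⊆ tsupport f := fun z hz => subset_tsupport f (by simp_all)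
  exact Submodule.smul_mem _ _ (indicator_one_mem_range_gammaMap (hf.isClopen_fiber c).isOpen
    (hfc.of_isClosed_subset (hf.isClopen_fiber c).isClosed hfiber))

end

/-- The canonical map `γ : C_c^∞(X) ⊗ C_c^∞(Y) → C_c^∞(X × Y)`, `γ(f ⊗ g)(x,y) = f(x)g(y)`,
is a linear isomorphism: `γ` is injective and its range is exactly `C_c^∞(X × Y)`. -/
theorem stmt_4 (X Y : Type)
    [TopologicalSpace X] [T2Space X] [LocallyCompactSpace X] [TotallyDisconnectedSpace X]
    [TopologicalSpace Y] [T2Space Y] [LocallyCompactSpace Y] [TotallyDisconnectedSpace Y] :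
    Function.Injective (gammaMap X Y) ∧ LinearMap.range (gammaMap X Y) = Cc (X × Y) :=
  ⟨gammaMap_injective, le_antisymm range_gammaMap_le Cc_le_range_gammaMap⟩
end

section
/- Every compact open subset W of a product X × Y of two totally disconnected locally compact Hausdorff spaces can be written as a finite disjoint union of rectangles U × V, where U ⊆ X and V ⊆ Y are compact open subsets. -/
/-!
Since `X` and `Y` have bases of clopen sets, the compact open set `W` is a finite union of clopen
rectangles `A r ×ˢ B r`. Recording which of the `A r` contain a point of `X`, and which of the
`B r` contain a point of `Y`, gives locally constant maps `f`, `g` to finite types, and `W` is a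
union of fibres of `Prod.map f g`. These fibres are pairwise disjoint rectangles
`f ⁻¹' {a} ×ˢ g ⁻¹' {b}` with open sides, and a fibre lying in `W` is closed in the compact set
`W`, so its (nonempty) sides are compact.
-/

open Set TopologicalSpace

variable {X Y : Type*} [TopologicalSpace X] [TopologicalSpace Y]

lemma IsCompact.of_prod_left {s : Set X} {t : Set Y} (h : IsCompact (s ×ˢ t)) (ht : t.Nonempty) :
    IsCompact s :=
  fst_image_prod s ht ▸ h.image continuous_fst

lemma IsCompact.of_prod_right {s : Set X} {t : Set Y} (h : IsCompact (s ×ˢ t)) (hs : s.Nonempty) :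
    IsCompact t :=
  snd_image_prod hs t ▸ h.image continuous_snd

lemma isLocallyConstant_boolIndicator_pi {ι : Type*} [Finite ι] {A : ι → Set X}
    (hA : ∀ i, IsClopen (A i)) : IsLocallyConstant fun x i ↦ (A i).boolIndicator x :=
  (IsLocallyConstant.iff_continuous _).2 <|
    continuous_pi fun i ↦ (continuous_boolIndicator_iff_isClopen _).2 (hA i)

lemma IsCompact.exists_finset_isClopen_rectangles_eq
    (hX : IsTopologicalBasis {s : Set X | IsClopen s})
    (hY : IsTopologicalBasis {t : Set Y | IsClopen t})
    {W : Set (X × Y)} (hWc : IsCompact W) (hWo : IsOpen W) :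
    ∃ R : Finset (Set X × Set Y), (∀ r ∈ R, IsClopen r.1 ∧ IsClopen r.2) ∧
      W = ⋃ r ∈ R, r.1 ×ˢ r.2 := by
  have hrect : ∀ w ∈ W, ∃ r : Set X × Set Y,
      IsClopen r.1 ∧ IsClopen r.2 ∧ w ∈ r.1 ×ˢ r.2 ∧ r.1 ×ˢ r.2 ⊆ W := by
    intro w hw
    obtain ⟨U, V, hU, hV, hxU, hyV, hUV⟩ := isOpen_prod_iff.1 hWo w.1 w.2 hw
    obtain ⟨A, hA, hxA, hAU⟩ := hX.mem_nhds_iff.1 (hU.mem_nhds hxU)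
    obtain ⟨B, hB, hyB, hBV⟩ := hY.mem_nhds_iff.1 (hV.mem_nhds hyV)
    exact ⟨(A, B), hA, hB, ⟨hxA, hyB⟩, (prod_mono hAU hBV).trans hUV⟩
  choose! r hr₁ hr₂ hwr hrW using hrect
  obtain ⟨t, htW, hWt⟩ := hWc.elim_nhds_subcover (fun w ↦ (r w).1 ×ˢ (r w).2)
    fun w hw ↦ ((hr₁ w hw).isOpen.prod (hr₂ w hw).isOpen).mem_nhds (hwr w hw)
  refine ⟨t.image r, ?_, ?_⟩
  · simp only [Finset.forall_mem_image]
    exact fun w hw ↦ ⟨hr₁ w (htW w hw), hr₂ w (htW w hw)⟩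
  · rw [Finset.set_biUnion_finset_image]
    exact hWt.antisymm (iUnion₂_subset fun w hw ↦ hrW w (htW w hw))

lemma IsCompact.exists_disjoint_rectangles_of_isLocallyConstant {α β : Type*} [Finite α]
    [Finite β] {f : X → α} {g : Y → β} (hf : IsLocallyConstant f) (hg : IsLocallyConstant g)
    {W : Set (X × Y)} (hWc : IsCompact W)
    (hW : ∀ ⦃p q : X × Y⦄, f p.1 = f q.1 → g p.2 = g q.2 → p ∈ W → q ∈ W) :
    ∃ (n : ℕ) (U : Fin n → Set X) (V : Fin n → Set Y),
      (∀ i, IsCompact (U i) ∧ IsOpen (U i) ∧ IsCompact (V i) ∧ IsOpen (V i)) ∧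
      Pairwise (fun i j => Disjoint (U i ×ˢ V i) (U j ×ˢ V j)) ∧
      W = ⋃ i, U i ×ˢ V i := by
  set F := Prod.map f g
  have hfib (p : α × β) : (f ⁻¹' {p.1}) ×ˢ (g ⁻¹' {p.2}) = F ⁻¹' {p} := by
    ext; simp [F, Prod.ext_iff]
  have hsat : F ⁻¹' (F '' W) = W := by
    refine (subset_preimage_image F W).antisymm' ?_
    rintro q ⟨p, hp, hpq⟩
    exact hW (congrArg Prod.fst hpq) (congrArg Prod.snd hpq) hp
  have hpiece : ∀ p ∈ F '' W,
      IsCompact (f ⁻¹' {p.1}) ∧ IsOpen (f ⁻¹' {p.1}) ∧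
        IsCompact (g ⁻¹' {p.2}) ∧ IsOpen (g ⁻¹' {p.2}) := by
    rintro ⟨a, b⟩ ⟨w, hw, hwab⟩
    have hK : IsCompact ((f ⁻¹' {a}) ×ˢ (g ⁻¹' {b})) := by
      refine hWc.of_isClosed_subset ((hf.isClopen_fiber a).isClosed.prod
        (hg.isClopen_fiber b).isClosed) ?_
      rw [hfib (a, b), ← hsat]
      exact preimage_mono (singleton_subset_iff.2 ⟨w, hw, hwab⟩)
    obtain ⟨hwa, hwb⟩ := Prod.ext_iff.1 hwab
    exact ⟨hK.of_prod_left ⟨w.2, hwb⟩, (hf.isClopen_fiber a).isOpen,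
      hK.of_prod_right ⟨w.1, hwa⟩, (hg.isClopen_fiber b).isOpen⟩
  let e := Finite.equivFin ↥(F '' W)
  refine ⟨_, fun i ↦ f ⁻¹' {(e.symm i).1.1}, fun i ↦ g ⁻¹' {(e.symm i).1.2},
    fun i ↦ hpiece _ (e.symm i).2, fun i j hij ↦ ?_, ?_⟩
  · simp only [hfib]
    exact (disjoint_singleton.2 (Subtype.coe_injective.ne (e.symm.injective.ne hij))).preimage F
  · simp only [hfib]
    rw [e.symm.surjective.iUnion_comp (fun p ↦ F ⁻¹' {p.1}), iUnion_coe_set,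
      biUnion_preimage_singleton, hsat]

/-- Every compact open subset of a product of two totally disconnected locally compact
Hausdorff spaces is a finite disjoint union of compact open rectangles. -/
theorem stmt_5 (X Y : Type)
    [TopologicalSpace X] [T2Space X] [LocallyCompactSpace X] [TotallyDisconnectedSpace X]
    [TopologicalSpace Y] [T2Space Y] [LocallyCompactSpace Y] [TotallyDisconnectedSpace Y]
    (W : Set (X × Y)) (hWc : IsCompact W) (hWo : IsOpen W) :
    ∃ (n : ℕ) (U : Fin n → Set X) (V : Fin n → Set Y),
      (∀ i, IsCompact (U i) ∧ IsOpen (U i) ∧ IsCompact (V i) ∧ IsOpen (V i)) ∧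
      Pairwise (fun i j => Disjoint (U i ×ˢ V i) (U j ×ˢ V j)) ∧
      W = ⋃ i, U i ×ˢ V i := by
  obtain ⟨R, hR, hWR⟩ := hWc.exists_finset_isClopen_rectangles_eq
    loc_compact_Haus_tot_disc_of_zero_dim loc_compact_Haus_tot_disc_of_zero_dim hWo
  refine hWc.exists_disjoint_rectangles_of_isLocallyConstant
    (isLocallyConstant_boolIndicator_pi fun r : R ↦ (hR r r.2).1)
    (isLocallyConstant_boolIndicator_pi fun r : R ↦ (hR r r.2).2) ?_
  intro p q hpq₁ hpq₂ hp
  rw [hWR, mem_iUnion₂] at hp ⊢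
  obtain ⟨r, hr, hp₁, hp₂⟩ := hp
  refine ⟨r, hr, ?_, ?_⟩
  · simpa [mem_iff_boolIndicator, congrFun hpq₁ ⟨r, hr⟩] using hp₁
  · simpa [mem_iff_boolIndicator, congrFun hpq₂ ⟨r, hr⟩] using hp₂
end

section
/- Let X, Y, Z be totally disconnected locally compact Hausdorff spaces and p : X → Z, q : Y → Z continuous maps. Then the canonical map from the balanced tensor product C_c^∞(X) ⊗_{C_c^∞(Z)} C_c^∞(Y) (with module structures induced by p* and q*) to C_c^∞(X ×_{p,q} Y) is an isomorphism, where X ×_{p,q} Y = {(x,y) : p(x) = q(y)} is the fibre product with the subspace topology. -/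
/-!
Both sides are governed by indicators of compact open sets. A compact open subset of the fibre
product is a finite union of traces of compact open rectangles `U ×ˢ V`, each of which is the
image of `1_U ⊗ 1_V`; since the image of the canonical map is closed under pointwise products,
inclusion–exclusion puts every such indicator, hence all of `C_c^∞(X ×_{p,q} Y)`, in the image.

For the kernel, a finite family in `C_c^∞(X)` is constant on finitely many compact open pieces
`A_j` and vanishes off them (likewise `B_k` in `Y`), so every tensor is
`∑ c_{jk} • 1_{A_j} ⊗ 1_{B_k}`. If `A_j × B_k` meets the fibre product, evaluating the image at
such a point gives `c_{jk}`, which therefore vanishes on the kernel. Otherwise `p(A_j)` and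
`q(B_k)` are disjoint compact sets, separated by a compact open `C ⊆ Z`, and
`1_{A_j} ⊗ 1_{B_k} = 1_{A_j} p*(1_C) ⊗ 1_{B_k} - 1_{A_j} ⊗ q*(1_C) 1_{B_k}` is a balancing relation.
-/

open TensorProduct

variable (X Y Z : Type) [TopologicalSpace X] [TopologicalSpace Y] [TopologicalSpace Z]
  (p : X → Z) (q : Y → Z)

/-- The `C_c^∞(Z)`-module structure on `C_c^∞(X)` induced by `p : X → Z`:
`f · p*(h) = f · (h ∘ p)`. -/
noncomputable def pmul (hp : Continuous p) (f : Cc X) (h : Cc Z) : Cc X :=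
  ⟨(f : X → ℂ) * fun x => (h : Z → ℂ) (p x),
    ⟨f.2.1.mul (h.2.1.comp_continuous hp), f.2.2.mul_right⟩⟩

/-- The `C_c^∞(Z)`-module structure on `C_c^∞(Y)` induced by `q : Y → Z`:
`q*(h) · g = (h ∘ q) · g`. -/
noncomputable def qmul (hq : Continuous q) (h : Cc Z) (g : Cc Y) : Cc Y :=
  ⟨(fun y => (h : Z → ℂ) (q y)) * (g : Y → ℂ),
    ⟨(h.2.1.comp_continuous hq).mul g.2.1, g.2.2.mul_left⟩⟩

/-- The balancing relations defining `C_c^∞(X) ⊗_{C_c^∞(Z)} C_c^∞(Y)`. -/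
noncomputable def balRel (hp : Continuous p) (hq : Continuous q) :
    Submodule ℂ (Cc X ⊗[ℂ] Cc Y) :=
  Submodule.span ℂ {t | ∃ (f : Cc X) (g : Cc Y) (h : Cc Z),
    t = (pmul X Z p hp f h) ⊗ₜ[ℂ] g - f ⊗ₜ[ℂ] (qmul Y Z q hq h g)}

/-- The canonical linear map `C_c^∞(X) ⊗ C_c^∞(Y) → (X ×_{p,q} Y → ℂ)` into functions on
the fibre product, `(f ⊗ g) ↦ ((x,y) ↦ f(x)g(y))`. -/
noncomputable def fibMap : (Cc X ⊗[ℂ] Cc Y) →ₗ[ℂ] ({w : X × Y // p w.1 = q w.2} → ℂ) :=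
  TensorProduct.lift <|
    LinearMap.mk₂ ℂ (fun f g => fun w => (f : X → ℂ) w.1.1 * (g : Y → ℂ) w.1.2)
      (by intros f₁ f₂ g; funext w; simp [add_mul])
      (by intros c f g; funext w; simp [smul_eq_mul]; ring)
      (by intros f g₁ g₂; funext w; simp [mul_add])
      (by intros c f g; funext w; simp [smul_eq_mul]; ring)

open Set Function TopologicalSpace

section LocallyCompactTotallyDisconnected

variable {H : Type*} [TopologicalSpace H] [T2Space H] [LocallyCompactSpace H]
  [TotallyDisconnectedSpace H]

theorem isTopologicalBasis_isCompact_isOpen :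
    IsTopologicalBasis {s : Set H | IsCompact s ∧ IsOpen s} := by
  refine isTopologicalBasis_of_isOpen_of_nhds (fun _ hs => hs.2) fun x U hxU hU => ?_
  obtain ⟨s, hs, hxs, hsU⟩ := exists_compact_subset hU hxU
  obtain ⟨V, hV, hxV, hVs⟩ :=
    loc_compact_Haus_tot_disc_of_zero_dim.exists_subset_of_mem_open hxs isOpen_interior
  exact ⟨V, ⟨hs.of_isClosed_subset hV.1 (hVs.trans interior_subset), hV.2⟩, hxV,
    (hVs.trans interior_subset).trans hsU⟩

theorem IsCompact.exists_isCompact_isOpen_between {K U : Set H} (hK : IsCompact K)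
    (hU : IsOpen U) (hKU : K ⊆ U) : ∃ C : Set H, IsCompact C ∧ IsOpen C ∧ K ⊆ C ∧ C ⊆ U := by
  choose V hV hxV hVU using fun x (hx : x ∈ K) =>
    isTopologicalBasis_isCompact_isOpen.exists_subset_of_mem_open (hKU hx) hU
  obtain ⟨t, ht⟩ := hK.elim_nhds_subcover' V fun x hx => (hV x hx).2.mem_nhds (hxV x hx)
  exact ⟨⋃ x ∈ t, V x.1 x.2, t.isCompact_biUnion fun x _ => (hV x.1 x.2).1,
    isOpen_biUnion fun x _ => (hV x.1 x.2).2, ht, iUnion₂_subset fun x _ => hVU x.1 x.2⟩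

end LocallyCompactTotallyDisconnected

theorem IsLocallyConstant.finite_image_of_isCompact {T M : Type*} [TopologicalSpace T]
    {F : T → M} (hF : IsLocallyConstant F) {S : Set T} (hS : IsCompact S) : (F '' S).Finite := by
  have : CompactSpace S := isCompact_iff_compactSpace.1 hS
  rw [image_eq_range]
  exact (hF.comp_continuous continuous_subtype_val).range_finite

theorem eq_sum_indicator_preimage_singleton {T M : Type*} [AddCommMonoid M]
    (F : T → M) {s : Finset M} (hs : ∀ x, F x ≠ 0 → F x ∈ s) :
    F = ∑ v ∈ s, (F ⁻¹' {v}).indicator (Function.const T v) := by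
  classical
  funext x
  rw [Finset.sum_apply]
  simp only [indicator_apply, mem_preimage, mem_singleton_iff, Function.const_apply,
    Finset.sum_ite_eq]
  split_ifs with h
  · rfl
  · exact not_not.1 (mt (hs x) h)

theorem IsLocallyConstant.exists_eq_sum_indicator {T M : Type*} [TopologicalSpace T]
    [AddCommMonoid M] {F : T → M} (hF : IsLocallyConstant F) (hFc : HasCompactSupport F) :
    ∃ (n : ℕ) (K : Fin n → CompactOpens T) (c : Fin n → M),
      (∀ j, ∀ x ∈ K j, F x = c j) ∧ F = ∑ j, (K j : Set T).indicator (Function.const T (c j)) := by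
  classical
  set vals := (hF.finite_image_of_isCompact hFc).toFinset.erase 0
  have hval : ∀ x, F x ≠ 0 → F x ∈ vals := fun x hx =>
    Finset.mem_erase.2 ⟨hx, (Finite.mem_toFinset _).2 ⟨x, subset_tsupport F hx, rfl⟩⟩
  have hfiber : ∀ v ∈ vals, IsCompact (F ⁻¹' {v}) := fun v hv =>
    hFc.of_isClosed_subset (hF.isClosed_fiber v) fun x (hx : F x = v) =>
      subset_tsupport F (show F x ≠ 0 from hx ▸ (Finset.mem_erase.1 hv).1)
  let e := vals.equivFin
  refine ⟨vals.card, fun j => ⟨⟨F ⁻¹' {(e.symm j : M)}, hfiber _ (e.symm j).2⟩,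
    IsLocallyConstant.iff_isOpen_fiber.1 hF _⟩, fun j => e.symm j, fun j x hx => hx, ?_⟩
  change F = ∑ j, (F ⁻¹' {(e.symm j : M)}).indicator (Function.const T (e.symm j : M))
  rw [e.symm.sum_comp (fun v => (F ⁻¹' {(v : M)}).indicator (Function.const T (v : M))),
    Finset.sum_coe_sort vals fun v => (F ⁻¹' {v}).indicator (Function.const T v)]
  exact eq_sum_indicator_preimage_singleton F hval

theorem HasCompactSupport.prod_mul {T₁ T₂ R : Type*} [TopologicalSpace T₁] [TopologicalSpace T₂]
    [MulZeroClass R] {f : T₁ → R} {g : T₂ → R} (hf : HasCompactSupport f)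
    (hg : HasCompactSupport g) : HasCompactSupport fun w : T₁ × T₂ => f w.1 * g w.2 := by
  refine .intro' (hf.prod hg) ((isClosed_tsupport f).prod (isClosed_tsupport g)) fun w hw => ?_
  rcases not_and_or.1 hw with h | h
  · rw [image_eq_zero_of_notMem_tsupport h, zero_mul]
  · rw [image_eq_zero_of_notMem_tsupport h, mul_zero]

theorem AddSubgroup.indicator_biUnion_mem {T A ι : Type*} [Ring A] (R : AddSubgroup (T → A))
    (hR : ∀ a ∈ R, ∀ b ∈ R, a * b ∈ R) {s : Set ι} (hs : s.Finite) {U : ι → Set T}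
    (hU : ∀ i ∈ s, (U i).indicator 1 ∈ R) : (⋃ i ∈ s, U i).indicator 1 ∈ R := by
  induction s, hs using Set.Finite.induction_on with
  | empty =>
    simp only [biUnion_empty, indicator_empty]
    exact R.zero_mem
  | @insert a s _ _ ih =>
    have hUa := hU a (mem_insert a s)
    have hUs := ih fun i hi => hU i (mem_insert_of_mem a hi)
    rw [biUnion_insert, ← add_sub_cancel_right ((U a ∪ _).indicator 1) ((U a ∩ _).indicator 1),
      indicator_union_add_inter, inter_indicator_one]
    exact R.sub_mem (R.add_mem hUa hUs) (hR _ hUa _ hUs)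

namespace Cc

variable {T : Type} [TopologicalSpace T]

theorem mul_mem {f g : T → ℂ} (hf : f ∈ Cc T) (hg : g ∈ Cc T) : f * g ∈ Cc T :=
  ⟨hf.1.mul hg.1, hf.2.mul_right⟩

noncomputable def indicator [T2Space T] (K : CompactOpens T) : Cc T :=
  ⟨(K : Set T).indicator 1, LocallyConstant.coe_charFn ℂ ⟨K.isCompact.isClosed, K.isOpen⟩ ▸
    (LocallyConstant.charFn ℂ ⟨K.isCompact.isClosed, K.isOpen⟩).isLocallyConstant,
    HasCompactSupport.intro K.isCompact fun _ hx => indicator_of_notMem hx 1⟩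

@[simp]
theorem coe_indicator [T2Space T] (K : CompactOpens T) :
    (indicator K : T → ℂ) = (K : Set T).indicator 1 :=
  rfl

end Cc

theorem isTopologicalBasis_subtype_prod_compactOpens {H₁ H₂ : Type*} [TopologicalSpace H₁]
    [T2Space H₁] [LocallyCompactSpace H₁] [TotallyDisconnectedSpace H₁] [TopologicalSpace H₂]
    [T2Space H₂] [LocallyCompactSpace H₂] [TotallyDisconnectedSpace H₂] (P : H₁ × H₂ → Prop) :
    IsTopologicalBasis (range fun UV : CompactOpens H₁ × CompactOpens H₂ =>
      (Subtype.val ⁻¹' ((UV.1 : Set H₁) ×ˢ (UV.2 : Set H₂)) : Set {w // P w})) := by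
  convert ((isTopologicalBasis_isCompact_isOpen (H := H₁)).prod
    (isTopologicalBasis_isCompact_isOpen (H := H₂))).isInducing
    (Topology.IsEmbedding.subtypeVal (p := P)).isInducing
  ext S
  simp only [mem_range, mem_image, mem_image2, mem_ofPred_eq, Prod.exists]
  constructor
  · rintro ⟨U, V, rfl⟩
    exact ⟨_, ⟨U, ⟨U.isCompact, U.isOpen⟩, V, ⟨V.isCompact, V.isOpen⟩, rfl⟩, rfl⟩
  · rintro ⟨_, ⟨U, hU, V, hV, rfl⟩, rfl⟩
    exact ⟨⟨⟨U, hU.1⟩, hU.2⟩, ⟨⟨V, hV.1⟩, hV.2⟩, rfl⟩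

theorem fibMap_tmul_apply (f : Cc X) (g : Cc Y) (w : {w : X × Y // p w.1 = q w.2}) :
    fibMap X Y Z p q (f ⊗ₜ[ℂ] g) w = (f : X → ℂ) w.1.1 * (g : Y → ℂ) w.1.2 :=
  rfl

theorem isClosedEmbedding_fibProd [T2Space Z] (hp : Continuous p) (hq : Continuous q) :
    Topology.IsClosedEmbedding (Subtype.val : {w : X × Y // p w.1 = q w.2} → X × Y) :=
  .subtypeVal (isClosed_eq (hp.comp continuous_fst) (hq.comp continuous_snd))

theorem fibMap_tmul_mem_Cc [T2Space Z] (hp : Continuous p) (hq : Continuous q) (f : Cc X)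
    (g : Cc Y) : fibMap X Y Z p q (f ⊗ₜ[ℂ] g) ∈ Cc {w : X × Y // p w.1 = q w.2} :=
  ⟨((f.2.1.comp_continuous continuous_fst).mul
      (g.2.1.comp_continuous continuous_snd)).comp_continuous continuous_subtype_val,
    (f.2.2.prod_mul g.2.2).comp_isClosedEmbedding (isClosedEmbedding_fibProd X Y Z p q hp hq)⟩

theorem range_fibMap_le [T2Space Z] (hp : Continuous p) (hq : Continuous q) :
    LinearMap.range (fibMap X Y Z p q) ≤ Cc {w : X × Y // p w.1 = q w.2} := by
  rintro _ ⟨t, rfl⟩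
  induction t using TensorProduct.induction_on with
  | zero => simpa only [map_zero] using zero_mem _
  | tmul f g => exact fibMap_tmul_mem_Cc X Y Z p q hp hq f g
  | add s t hs ht => simpa only [map_add] using add_mem hs ht

theorem mul_mem_range_fibMap {a b : {w : X × Y // p w.1 = q w.2} → ℂ}
    (ha : a ∈ LinearMap.range (fibMap X Y Z p q)) (hb : b ∈ LinearMap.range (fibMap X Y Z p q)) :
    a * b ∈ LinearMap.range (fibMap X Y Z p q) := by
  obtain ⟨s, rfl⟩ := ha
  obtain ⟨t, rfl⟩ := hb
  induction s using TensorProduct.induction_on with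
  | zero => simpa only [map_zero, zero_mul] using zero_mem _
  | add s s' hs hs' => simpa only [map_add, add_mul] using add_mem hs hs'
  | tmul f g =>
    induction t using TensorProduct.induction_on with
    | zero => simpa only [map_zero, mul_zero] using zero_mem _
    | add t t' ht ht' => simpa only [map_add, mul_add] using add_mem ht ht'
    | tmul f' g' =>
      refine ⟨⟨_, Cc.mul_mem f.2 f'.2⟩ ⊗ₜ[ℂ] ⟨_, Cc.mul_mem g.2 g'.2⟩, funext fun w => ?_⟩
      simp only [fibMap_tmul_apply, Pi.mul_apply]
      ring

theorem indicator_preimage_prod_eq_fibMap [T2Space X] [T2Space Y] (U : CompactOpens X)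
    (V : CompactOpens Y) :
    (Subtype.val ⁻¹' ((U : Set X) ×ˢ (V : Set Y)) : Set {w : X × Y // p w.1 = q w.2}).indicator 1
      = fibMap X Y Z p q (Cc.indicator U ⊗ₜ[ℂ] Cc.indicator V) :=
  funext fun _ => (indicator_comp_right (g := (1 : X × Y → ℂ)) Subtype.val).trans
    indicator_prod_one

theorem indicator_mem_range_fibMap
    [T2Space X] [LocallyCompactSpace X] [TotallyDisconnectedSpace X]
    [T2Space Y] [LocallyCompactSpace Y] [TotallyDisconnectedSpace Y] [T2Space Z]
    (hp : Continuous p) (hq : Continuous q) (K : CompactOpens {w : X × Y // p w.1 = q w.2}) :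
    (K : Set {w : X × Y // p w.1 = q w.2}).indicator 1 ∈ LinearMap.range (fibMap X Y Z p q) := by
  obtain ⟨s, hs, hK⟩ := (isCompact_open_iff_eq_finite_iUnion_of_isTopologicalBasis _
    (isTopologicalBasis_subtype_prod_compactOpens _) (fun UV =>
      (isClosedEmbedding_fibProd X Y Z p q hp hq).isCompact_preimage
        (UV.1.isCompact.prod UV.2.isCompact)) K).1 ⟨K.isCompact, K.isOpen⟩
  rw [hK]
  exact (LinearMap.range (fibMap X Y Z p q)).toAddSubgroup.indicator_biUnion_mem
    (fun _ ha _ hb => mul_mem_range_fibMap X Y Z p q ha hb) hs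
    fun UV _ => ⟨_, (indicator_preimage_prod_eq_fibMap X Y Z p q UV.1 UV.2).symm⟩

theorem Cc_le_range_fibMap
    [T2Space X] [LocallyCompactSpace X] [TotallyDisconnectedSpace X]
    [T2Space Y] [LocallyCompactSpace Y] [TotallyDisconnectedSpace Y] [T2Space Z]
    (hp : Continuous p) (hq : Continuous q) :
    Cc {w : X × Y // p w.1 = q w.2} ≤ LinearMap.range (fibMap X Y Z p q) := by
  intro e he
  obtain ⟨n, K, c, -, rfl⟩ := he.1.exists_eq_sum_indicator he.2
  refine Submodule.sum_mem _ fun j _ => ?_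
  have hK : (K j : Set {w : X × Y // p w.1 = q w.2}).indicator (Function.const _ (c j)) =
      c j • (K j : Set {w : X × Y // p w.1 = q w.2}).indicator 1 :=
    funext fun w => by by_cases hw : w ∈ K j <;> simp [hw]
  exact hK ▸ Submodule.smul_mem _ _ (indicator_mem_range_fibMap X Y Z p q hp hq (K j))

theorem Cc.exists_eq_sum_smul_indicator {T : Type} [TopologicalSpace T] [T2Space T]
    {ι : Type*} [Finite ι] (f : ι → Cc T) :
    ∃ (n : ℕ) (K : Fin n → CompactOpens T) (c : Fin n → ι → ℂ),
      (∀ j, ∀ x ∈ K j, ∀ i, (f i : T → ℂ) x = c j i) ∧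
        ∀ i, f i = ∑ j, c j i • Cc.indicator (K j) := by
  have hF : IsLocallyConstant fun x i => (f i : T → ℂ) x :=
    (LocallyConstant.unflip fun i => (⟨f i, (f i).2.1⟩ : LocallyConstant T ℂ)).isLocallyConstant
  have hFc : HasCompactSupport fun x i => (f i : T → ℂ) x :=
    .intro' (isCompact_iUnion fun i => (f i).2.2) (isClosed_iUnion_of_finite fun _ =>
      isClosed_tsupport _) fun _ hx => funext fun i =>
        image_eq_zero_of_notMem_tsupport fun h => hx (mem_iUnion.2 ⟨i, h⟩)
  obtain ⟨n, K, c, hc, hsum⟩ := hF.exists_eq_sum_indicator hFc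
  refine ⟨n, K, c, fun j x hx i => congrFun (hc j x hx) i,
    fun i => Subtype.ext (funext fun x => ?_)⟩
  have := congrFun (congrFun hsum x) i
  simp only [Finset.sum_apply] at this
  simp only [Submodule.coe_sum, Submodule.coe_smul, Finset.sum_apply, Pi.smul_apply,
    Cc.coe_indicator]
  rw [this]
  refine Finset.sum_congr rfl fun j _ => ?_
  by_cases hx : x ∈ K j <;> simp [hx]

theorem tmul_indicator_mem_balRel [T2Space X] [T2Space Y]
    [T2Space Z] [LocallyCompactSpace Z] [TotallyDisconnectedSpace Z]
    (hp : Continuous p) (hq : Continuous q) {U : CompactOpens X} {V : CompactOpens Y}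
    (hUV : ∀ x ∈ U, ∀ y ∈ V, p x ≠ q y) :
    Cc.indicator U ⊗ₜ[ℂ] Cc.indicator V ∈ balRel X Y Z p q hp hq := by
  obtain ⟨C, hCc, hCo, hUC, hCV⟩ := (U.isCompact.image hp).exists_isCompact_isOpen_between
    (V.isCompact.image hq).isClosed.isOpen_compl (by
      rintro _ ⟨x, hx, rfl⟩ ⟨y, hy, hxy⟩
      exact hUV x hx y hy hxy.symm)
  let h : Cc Z := Cc.indicator ⟨⟨C, hCc⟩, hCo⟩
  have hU : pmul X Z p hp (Cc.indicator U) h = Cc.indicator U := by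
    refine Subtype.ext (funext fun x => ?_)
    by_cases hx : x ∈ U
    · simp [pmul, h, hx, hUC ⟨x, hx, rfl⟩]
    · simp [pmul, h, hx]
  have hV : qmul Y Z q hq h (Cc.indicator V) = 0 := by
    refine Subtype.ext (funext fun y => ?_)
    by_cases hy : y ∈ V
    · simp [qmul, h, show q y ∉ C from fun hC => hCV hC ⟨y, hy, rfl⟩]
    · simp [qmul, h, hy]
  refine Submodule.subset_span ⟨Cc.indicator U, Cc.indicator V, h, ?_⟩
  rw [hU, hV, tmul_zero]
  exact (sub_zero (Cc.indicator U ⊗ₜ[ℂ] Cc.indicator V)).symm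

theorem balRel_le_ker_fibMap (hp : Continuous p) (hq : Continuous q) :
    balRel X Y Z p q hp hq ≤ LinearMap.ker (fibMap X Y Z p q) := by
  refine Submodule.span_le.2 ?_
  rintro _ ⟨f, g, h, rfl⟩
  rw [SetLike.mem_coe, LinearMap.mem_ker, map_sub, sub_eq_zero]
  funext w
  change (f : X → ℂ) w.1.1 * (h : Z → ℂ) (p w.1.1) * (g : Y → ℂ) w.1.2 =
    (f : X → ℂ) w.1.1 * ((h : Z → ℂ) (q w.1.2) * (g : Y → ℂ) w.1.2)
  rw [w.2, mul_assoc]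

theorem ker_fibMap_le_balRel [T2Space X] [T2Space Y]
    [T2Space Z] [LocallyCompactSpace Z] [TotallyDisconnectedSpace Z]
    (hp : Continuous p) (hq : Continuous q) :
    LinearMap.ker (fibMap X Y Z p q) ≤ balRel X Y Z p q hp hq := by
  intro t ht
  obtain ⟨S, rfl⟩ := TensorProduct.exists_finset t
  rw [LinearMap.mem_ker] at ht
  obtain ⟨m, K, c, hc, hf⟩ := Cc.exists_eq_sum_smul_indicator fun i : S => i.1.1
  obtain ⟨n, L, d, hd, hg⟩ := Cc.exists_eq_sum_smul_indicator fun i : S => i.1.2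
  have hexpand : ∑ i ∈ S, i.1 ⊗ₜ[ℂ] i.2 = ∑ k, ∑ j,
      (∑ i : S, c j i * d k i) • (Cc.indicator (K j) ⊗ₜ[ℂ] Cc.indicator (L k)) := by
    rw [← Finset.sum_coe_sort]
    simp only [hf, hg, sum_tmul, tmul_sum, smul_tmul_smul, Finset.sum_smul]
    rw [Finset.sum_comm]
    exact Finset.sum_congr rfl fun _ _ => Finset.sum_comm
  rw [hexpand]
  refine Submodule.sum_mem _ fun k _ => Submodule.sum_mem _ fun j _ => ?_
  by_cases h : ∃ x ∈ K j, ∃ y ∈ L k, p x = q y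
  · obtain ⟨x, hx, y, hy, hxy⟩ := h
    have hcoeff : ∑ i : S, c j i * d k i = 0 := by
      have := congrFun ht ⟨(x, y), hxy⟩
      rw [← Finset.sum_coe_sort, map_sum, Finset.sum_apply] at this
      simpa only [fibMap_tmul_apply, hc j x hx, hd k y hy, Pi.zero_apply] using this
    rw [hcoeff, zero_smul]
    exact zero_mem _
  · push Not at h
    exact Submodule.smul_mem _ _ (tmul_indicator_mem_balRel X Y Z p q hp hq h)

/-- The canonical map from the balanced tensor product
`C_c^∞(X) ⊗_{C_c^∞(Z)} C_c^∞(Y)` to `C_c^∞(X ×_{p,q} Y)` is an isomorphism: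
the kernel of the lift on `C_c^∞(X) ⊗ C_c^∞(Y)` is exactly the balancing relation
submodule, and its range is exactly `C_c^∞` of the fibre product. -/
theorem stmt_7
    [T2Space X] [LocallyCompactSpace X] [TotallyDisconnectedSpace X]
    [T2Space Y] [LocallyCompactSpace Y] [TotallyDisconnectedSpace Y]
    [T2Space Z] [LocallyCompactSpace Z] [TotallyDisconnectedSpace Z]
    (hp : Continuous p) (hq : Continuous q) :
    LinearMap.ker (fibMap X Y Z p q) = balRel X Y Z p q hp hq ∧
    LinearMap.range (fibMap X Y Z p q) = Cc {w : X × Y // p w.1 = q w.2} :=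
  ⟨le_antisymm (ker_fibMap_le_balRel X Y Z p q hp hq) (balRel_le_ker_fibMap X Y Z p q hp hq),
    le_antisymm (range_fibMap_le X Y Z p q hp hq) (Cc_le_range_fibMap X Y Z p q hp hq)⟩
end

section
/- Let G be an ample Hausdorff groupoid and let M ⊆ G be the set of loops G_ad = {α ∈ G : r(α) = s(α)}, which is a closed subset of G and hence totally disconnected locally compact Hausdorff. The formula T(f)(α, β) = f(α, αβ) defines a linear automorphism T of C_c^∞(G_ad ×_{π,r} G) (where π = r = s on G_ad) which is a bimodule map for both the pointwise C_c^∞(G_ad)-actions ((h·f)(α,β) = h(α)f(α,β) on the left, (f·h)(α,β) = h(β⁻¹αβ)f(α,β) on the right) and the convolution actions of the Steinberg algebra C_c^∞(G) on the left and right (given by (g·f)(α,β) = Σ_{γ ∈ G^{r(α)}} g(γ) f(γ⁻¹αγ, γ⁻¹β) and (f·g)(α,β) = Σ_{γ ∈ G_{s(β)}} f(α, βγ⁻¹) g(γ)). -/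
/-- An ample groupoid: a locally compact Hausdorff étale groupoid with totally disconnected
unit space, encoded as a type `G` of arrows with source and range maps `s, r : G → G`
(taking values in the unit space, identified with a subset of `G`), a partially defined
composition, and inversion; ampleness is encoded by the requirement that the compact open
bisections form a basis of the topology. -/
structure AmpleGroupoid (G : Type) [TopologicalSpace G] where
  s : G → G
  r : G → G
  mul : ∀ a b : G, s a = r b → G
  inv : G → G
  s_s : ∀ a, s (s a) = s a
  r_s : ∀ a, r (s a) = s a
  s_r : ∀ a, s (r a) = r a
  r_r : ∀ a, r (r a) = r a
  s_mul : ∀ a b h, s (mul a b h) = s b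
  r_mul : ∀ a b h, r (mul a b h) = r a
  mul_assoc : ∀ (a b c : G) (h1 : s a = r b) (h2 : s b = r c)
      (h3 : s (mul a b h1) = r c) (h4 : s a = r (mul b c h2)),
      mul (mul a b h1) c h3 = mul a (mul b c h2) h4
  s_inv : ∀ a, s (inv a) = r a
  r_inv : ∀ a, r (inv a) = s a
  unit_mul : ∀ (a : G) (h : s (r a) = r a), mul (r a) a h = a
  mul_unit : ∀ (a : G) (h : s a = r (s a)), mul a (s a) h = a
  inv_mul : ∀ (a : G) (h : s (inv a) = r a), mul (inv a) a h = s a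
  mul_inv : ∀ (a : G) (h : s a = r (inv a)), mul a (inv a) h = r a
  continuous_s : Continuous s
  continuous_r : Continuous r
  continuous_inv : Continuous inv
  continuous_mul : Continuous fun p : {p : G × G // s p.1 = r p.2} => mul p.1.1 p.1.2 p.2
  isOpen_units : IsOpen {x : G | s x = x}
  isBasis : TopologicalSpace.IsTopologicalBasis
      {U : Set G | IsCompact U ∧ IsOpen U ∧ Set.InjOn s U ∧ Set.InjOn r U}

namespace AmpleGroupoid

variable {G : Type} [TopologicalSpace G] (𝒢 : AmpleGroupoid G)

/-- The unit space `G⁰` of the groupoid. -/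
def units : Set G := {x : G | 𝒢.s x = x}

/-- The fibrewise integration map `λ(f)(x) = ∑_{α ∈ G^x} f(α)` on the unit space. -/
noncomputable def lam (f : G → ℂ) : 𝒢.units → ℂ :=
  fun x => ∑ᶠ (α : G) (_ : 𝒢.r α = (x : G)), f α

/-- The convolution product of the Steinberg algebra:
`(f * g)(α) = ∑_{β ∈ G^{r(α)}} f(β) g(β⁻¹α)`. -/
noncomputable def conv (f g : G → ℂ) : G → ℂ :=
  fun α => ∑ᶠ (β : G) (h : 𝒢.r β = 𝒢.r α),
    f β * g (𝒢.mul (𝒢.inv β) α ((𝒢.s_inv β).trans h))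

end AmpleGroupoid

namespace AmpleGroupoid

variable {G : Type} [TopologicalSpace G] (𝒢 : AmpleGroupoid G)

/-- The space `G_ad ×_{π,r} G` of pairs `(α, β)` with `α` a loop (`s(α) = r(α)`) and
`r(β) = r(α)`. -/
abbrev adPairs : Type := {p : G × G // 𝒢.s p.1 = 𝒢.r p.1 ∧ 𝒢.r p.2 = 𝒢.r p.1}

/-- The canonical map `T(f)(α, β) = f(α, αβ)`. -/
noncomputable def Tmap (f : 𝒢.adPairs → ℂ) : 𝒢.adPairs → ℂ :=
  fun w => f ⟨(w.1.1, 𝒢.mul w.1.1 w.1.2 (w.2.1.trans w.2.2.symm)),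
    ⟨w.2.1, 𝒢.r_mul _ _ _⟩⟩

/-- The left pointwise action of functions on `G_ad`: `(h·f)(α,β) = h(α) f(α,β)`. -/
noncomputable def actL (h : G → ℂ) (f : 𝒢.adPairs → ℂ) : 𝒢.adPairs → ℂ :=
  fun w => h w.1.1 * f w

/-- The right pointwise action of functions on `G_ad`:
`(f·h)(α,β) = h(β⁻¹αβ) f(α,β)`. -/
noncomputable def actR (f : 𝒢.adPairs → ℂ) (h : G → ℂ) : 𝒢.adPairs → ℂ :=
  fun w => h (𝒢.mul (𝒢.mul (𝒢.inv w.1.2) w.1.1 ((𝒢.s_inv w.1.2).trans w.2.2)) w.1.2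
      (by simp only [𝒢.s_mul]; exact w.2.1.trans w.2.2.symm)) * f w

/-- The left convolution action of the Steinberg algebra:
`(g·f)(α,β) = ∑_{γ ∈ G^{r(α)}} g(γ) f(γ⁻¹αγ, γ⁻¹β)`. -/
noncomputable def convL (g : G → ℂ) (f : 𝒢.adPairs → ℂ) : 𝒢.adPairs → ℂ :=
  fun w => ∑ᶠ (γ : G) (h : 𝒢.r γ = 𝒢.r w.1.1),
    g γ * f ⟨(𝒢.mul (𝒢.mul (𝒢.inv γ) w.1.1 ((𝒢.s_inv γ).trans h)) γ
                (by simp only [𝒢.s_mul]; exact w.2.1.trans h.symm),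
              𝒢.mul (𝒢.inv γ) w.1.2 ((𝒢.s_inv γ).trans (h.trans w.2.2.symm))),
             ⟨by simp only [𝒢.s_mul, 𝒢.r_mul, 𝒢.r_inv],
              by simp only [𝒢.s_mul, 𝒢.r_mul, 𝒢.r_inv]⟩⟩

/-- The right convolution action of the Steinberg algebra:
`(f·g)(α,β) = ∑_{γ ∈ G_{s(β)}} f(α, βγ⁻¹) g(γ)`. -/
noncomputable def convR (f : 𝒢.adPairs → ℂ) (g : G → ℂ) : 𝒢.adPairs → ℂ :=
  fun w => ∑ᶠ (γ : G) (h : 𝒢.s γ = 𝒢.s w.1.2),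
    f ⟨(w.1.1, 𝒢.mul w.1.2 (𝒢.inv γ) (by rw [𝒢.r_inv]; exact h.symm)),
       ⟨w.2.1, by simp only [𝒢.r_mul]; exact w.2.2⟩⟩ * g γ

end AmpleGroupoid

/-!
`T` is precomposition with the homeomorphism `(α, β) ↦ (α, αβ)` of `G_ad ×_{π,r} G`, whose inverse
is `(α, β) ↦ (α, α⁻¹β)`; this gives bijectivity, linearity and the preservation of locally constant
compactly supported functions. Compatibility with the four actions reduces to associativity and the
groupoid identities `(αβ)⁻¹α(αβ) = β⁻¹αβ` and `(γ⁻¹αγ)(γ⁻¹β) = γ⁻¹(αβ)`.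
-/

section CompHomeomorph

variable {X Y M : Type*} [TopologicalSpace X] [TopologicalSpace Y]

theorem isLocallyConstant_comp_homeomorph_iff (e : X ≃ₜ Y) {f : Y → M} :
    IsLocallyConstant (f ∘ e) ↔ IsLocallyConstant f := by
  refine ⟨fun h => ?_, fun h => h.comp_continuous e.continuous⟩
  simpa [Function.comp_def] using h.comp_continuous e.symm.continuous

theorem hasCompactSupport_comp_homeomorph_iff [Zero M] (e : X ≃ₜ Y) {f : Y → M} :
    HasCompactSupport (f ∘ e) ↔ HasCompactSupport f := by
  refine ⟨fun h => ?_, fun h => h.comp_homeomorph e⟩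
  simpa [Function.comp_def] using h.comp_homeomorph e.symm

end CompHomeomorph

namespace AmpleGroupoid

variable {G : Type} [TopologicalSpace G] (𝒢 : AmpleGroupoid G)

theorem mul_congr {a a' b b' : G} (ha : a = a') (hb : b = b')
    (h : 𝒢.s a = 𝒢.r b) (h' : 𝒢.s a' = 𝒢.r b') :
    𝒢.mul a b h = 𝒢.mul a' b' h' := by
  subst ha hb; rfl

theorem inv_mul_cancel_left (a b : G) (h : 𝒢.s a = 𝒢.r b)
    (h' : 𝒢.s (𝒢.inv a) = 𝒢.r (𝒢.mul a b h)) :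
    𝒢.mul (𝒢.inv a) (𝒢.mul a b h) h' = b := by
  have ha : 𝒢.s (𝒢.inv a) = 𝒢.r a := 𝒢.s_inv a
  rw [← 𝒢.mul_assoc _ _ _ ha h (by rw [𝒢.s_mul]; exact h)]
  calc _ = 𝒢.mul (𝒢.r b) b (𝒢.s_r b) := 𝒢.mul_congr ((𝒢.inv_mul a ha).trans h) rfl _ _
    _ = b := 𝒢.unit_mul b _

theorem mul_inv_cancel_left (a b : G) (h : 𝒢.s (𝒢.inv a) = 𝒢.r b)
    (h' : 𝒢.s a = 𝒢.r (𝒢.mul (𝒢.inv a) b h)) :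
    𝒢.mul a (𝒢.mul (𝒢.inv a) b h) h' = b := by
  have ha : 𝒢.s a = 𝒢.r (𝒢.inv a) := (𝒢.r_inv a).symm
  rw [← 𝒢.mul_assoc _ _ _ ha h (by rw [𝒢.s_mul]; exact h)]
  calc _ = 𝒢.mul (𝒢.r b) b (𝒢.s_r b) :=
        𝒢.mul_congr ((𝒢.mul_inv a ha).trans ((𝒢.s_inv a).symm.trans h)) rfl _ _
    _ = b := 𝒢.unit_mul b _

theorem eq_inv_of_mul_eq (m x : G) (hx : 𝒢.s x = 𝒢.r m)
    (hm : 𝒢.mul x m hx = 𝒢.s m) : x = 𝒢.inv m := by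
  have hm' : 𝒢.s m = 𝒢.r (𝒢.inv m) := (𝒢.r_inv m).symm
  calc x = 𝒢.mul x (𝒢.s x) (𝒢.r_s x).symm := (𝒢.mul_unit x _).symm
    _ = 𝒢.mul x (𝒢.mul m (𝒢.inv m) hm') (by rw [𝒢.r_mul]; exact hx) :=
        𝒢.mul_congr rfl (hx.trans (𝒢.mul_inv m hm').symm) _ _
    _ = 𝒢.mul (𝒢.mul x m hx) (𝒢.inv m) (by rw [𝒢.s_mul]; exact hm') :=
        (𝒢.mul_assoc _ _ _ _ _ _ _).symm
    _ = 𝒢.mul (𝒢.r (𝒢.inv m)) (𝒢.inv m) (𝒢.s_r _) :=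
        𝒢.mul_congr (hm.trans hm') rfl _ _
    _ = 𝒢.inv m := 𝒢.unit_mul _ _

/-- `(αβ)⁻¹α = β⁻¹`. -/
theorem inv_mul_mul_self (a b : G) (h : 𝒢.s a = 𝒢.r b)
    (h' : 𝒢.s (𝒢.inv (𝒢.mul a b h)) = 𝒢.r a) :
    𝒢.mul (𝒢.inv (𝒢.mul a b h)) a h' = 𝒢.inv b := by
  refine 𝒢.eq_inv_of_mul_eq b _ (by rw [𝒢.s_mul]; exact h) ?_
  rw [𝒢.mul_assoc _ _ _ h' h _ (by rw [𝒢.s_inv])]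
  exact (𝒢.inv_mul _ _).trans (𝒢.s_mul a b h)

/-- `(αβ)⁻¹α(αβ) = β⁻¹αβ` for a loop `α`. -/
theorem conj_mul_self (a b : G) (e : 𝒢.s a = 𝒢.r b)
    (h₁ : 𝒢.s (𝒢.inv (𝒢.mul a b e)) = 𝒢.r a)
    (h₂ : 𝒢.s (𝒢.mul (𝒢.inv (𝒢.mul a b e)) a h₁) = 𝒢.r (𝒢.mul a b e))
    (h₁' : 𝒢.s (𝒢.inv b) = 𝒢.r a) (h₂' : 𝒢.s (𝒢.mul (𝒢.inv b) a h₁') = 𝒢.r b) :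
    𝒢.mul (𝒢.mul (𝒢.inv (𝒢.mul a b e)) a h₁) (𝒢.mul a b e) h₂
      = 𝒢.mul (𝒢.mul (𝒢.inv b) a h₁') b h₂' := by
  rw [𝒢.mul_assoc _ _ _ h₁' e h₂' (by rw [𝒢.r_mul]; exact h₁')]
  exact 𝒢.mul_congr (𝒢.inv_mul_mul_self a b e h₁) rfl _ _

/-- `(γ⁻¹αγ)(γ⁻¹β) = γ⁻¹(αβ)`. -/
theorem conj_mul_inv_mul (a b c : G) (hab : 𝒢.s a = 𝒢.r b)
    (h₁ : 𝒢.s (𝒢.inv c) = 𝒢.r a) (h₂ : 𝒢.s (𝒢.mul (𝒢.inv c) a h₁) = 𝒢.r c)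
    (h₃ : 𝒢.s (𝒢.inv c) = 𝒢.r b)
    (h₄ : 𝒢.s (𝒢.mul (𝒢.mul (𝒢.inv c) a h₁) c h₂) = 𝒢.r (𝒢.mul (𝒢.inv c) b h₃))
    (h₅ : 𝒢.s (𝒢.inv c) = 𝒢.r (𝒢.mul a b hab)) :
    𝒢.mul (𝒢.mul (𝒢.mul (𝒢.inv c) a h₁) c h₂) (𝒢.mul (𝒢.inv c) b h₃) h₄
      = 𝒢.mul (𝒢.inv c) (𝒢.mul a b hab) h₅ := by
  have hc : 𝒢.s c = 𝒢.r (𝒢.mul (𝒢.inv c) b h₃) := by rw [𝒢.r_mul, 𝒢.r_inv]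
  rw [𝒢.mul_assoc _ _ _ h₂ hc h₄ (by rw [𝒢.r_mul]; exact h₂)]
  calc _ = 𝒢.mul (𝒢.mul (𝒢.inv c) a h₁) b (by rw [𝒢.s_mul]; exact hab) :=
        𝒢.mul_congr rfl (𝒢.mul_inv_cancel_left c b h₃ hc) _ _
    _ = _ := 𝒢.mul_assoc _ _ _ _ _ _ _

def shear : 𝒢.adPairs ≃ₜ 𝒢.adPairs where
  toFun w := ⟨(w.1.1, 𝒢.mul w.1.1 w.1.2 (w.2.1.trans w.2.2.symm)), ⟨w.2.1, 𝒢.r_mul _ _ _⟩⟩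
  invFun w := ⟨(w.1.1, 𝒢.mul (𝒢.inv w.1.1) w.1.2 ((𝒢.s_inv w.1.1).trans w.2.2.symm)),
    ⟨w.2.1, by rw [𝒢.r_mul, 𝒢.r_inv]; exact w.2.1⟩⟩
  left_inv _ := Subtype.ext (Prod.ext rfl (𝒢.inv_mul_cancel_left _ _ _ _))
  right_inv _ := Subtype.ext (Prod.ext rfl (𝒢.mul_inv_cancel_left _ _ _ _))
  continuous_toFun := by
    have hpair : Continuous fun w : 𝒢.adPairs =>
        (⟨w.1, w.2.1.trans w.2.2.symm⟩ : {p : G × G // 𝒢.s p.1 = 𝒢.r p.2}) :=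
      continuous_subtype_val.subtype_mk _
    exact .subtype_mk ((continuous_fst.comp continuous_subtype_val).prodMk
      (𝒢.continuous_mul.comp hpair)) _
  continuous_invFun := by
    have hpair : Continuous fun w : 𝒢.adPairs =>
        (⟨(𝒢.inv w.1.1, w.1.2), (𝒢.s_inv w.1.1).trans w.2.2.symm⟩ :
          {p : G × G // 𝒢.s p.1 = 𝒢.r p.2}) :=
      ((𝒢.continuous_inv.comp (continuous_fst.comp continuous_subtype_val)).prodMk
        (continuous_snd.comp continuous_subtype_val)).subtype_mk _
    exact .subtype_mk ((continuous_fst.comp continuous_subtype_val).prodMk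
      (𝒢.continuous_mul.comp hpair)) _

theorem Tmap_eq_comp_shear (f : 𝒢.adPairs → ℂ) : 𝒢.Tmap f = f ∘ 𝒢.shear := rfl

theorem Tmap_bijective : Function.Bijective 𝒢.Tmap :=
  (LinearEquiv.funCongrLeft ℂ ℂ 𝒢.shear.toEquiv).bijective

theorem isLocallyConstant_Tmap_and_hasCompactSupport_Tmap_iff (f : 𝒢.adPairs → ℂ) :
    (IsLocallyConstant (𝒢.Tmap f) ∧ HasCompactSupport (𝒢.Tmap f)) ↔
      (IsLocallyConstant f ∧ HasCompactSupport f) := by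
  rw [Tmap_eq_comp_shear, isLocallyConstant_comp_homeomorph_iff,
    hasCompactSupport_comp_homeomorph_iff]

theorem Tmap_actR (h : G → ℂ) (f : 𝒢.adPairs → ℂ) :
    𝒢.Tmap (𝒢.actR f h) = 𝒢.actR (𝒢.Tmap f) h := by
  funext ⟨⟨α, β⟩, hα, hβ⟩
  exact congrArg (· * _) (congrArg h (𝒢.conj_mul_self α β _ _ _ _ _))

theorem Tmap_convL (g : G → ℂ) (f : 𝒢.adPairs → ℂ) :
    𝒢.Tmap (𝒢.convL g f) = 𝒢.convL g (𝒢.Tmap f) := by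
  funext ⟨⟨α, β⟩, hα, hβ⟩
  refine finsum_congr fun γ => finsum_congr fun hγ => ?_
  refine congrArg (fun z => g γ * f z) (Subtype.ext (Prod.ext rfl ?_))
  exact (𝒢.conj_mul_inv_mul α β γ (hα.trans hβ.symm) _ _ _ _ _).symm

theorem Tmap_convR (g : G → ℂ) (f : 𝒢.adPairs → ℂ) :
    𝒢.Tmap (𝒢.convR f g) = 𝒢.convR (𝒢.Tmap f) g := by
  funext ⟨⟨α, β⟩, hα, hβ⟩
  refine finsum_congr fun γ => finsum_congr_Prop (by rw [𝒢.s_mul]) fun hγ => ?_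
  exact congrArg (fun z => f z * g γ) (Subtype.ext (Prod.ext rfl (𝒢.mul_assoc _ _ _ _ _ _ _)))

end AmpleGroupoid

theorem stmt_15_general (G : Type) [TopologicalSpace G] [T2Space G]
    (𝒢 : AmpleGroupoid G) :
    IsClosed {α : G | 𝒢.r α = 𝒢.s α} ∧
    Function.Bijective 𝒢.Tmap ∧
    (∀ f g : 𝒢.adPairs → ℂ, 𝒢.Tmap (f + g) = 𝒢.Tmap f + 𝒢.Tmap g) ∧
    (∀ (a : ℂ) (f : 𝒢.adPairs → ℂ), 𝒢.Tmap (a • f) = a • 𝒢.Tmap f) ∧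
    (∀ f : 𝒢.adPairs → ℂ, (IsLocallyConstant f ∧ HasCompactSupport f) ↔
        (IsLocallyConstant (𝒢.Tmap f) ∧ HasCompactSupport (𝒢.Tmap f))) ∧
    (∀ (h : G → ℂ) (f : 𝒢.adPairs → ℂ), 𝒢.Tmap (𝒢.actL h f) = 𝒢.actL h (𝒢.Tmap f)) ∧
    (∀ (h : G → ℂ) (f : 𝒢.adPairs → ℂ), 𝒢.Tmap (𝒢.actR f h) = 𝒢.actR (𝒢.Tmap f) h) ∧
    (∀ (g : G → ℂ) (f : 𝒢.adPairs → ℂ), 𝒢.Tmap (𝒢.convL g f) = 𝒢.convL g (𝒢.Tmap f)) ∧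
    (∀ (g : G → ℂ) (f : 𝒢.adPairs → ℂ), 𝒢.Tmap (𝒢.convR f g) = 𝒢.convR (𝒢.Tmap f) g) :=
  ⟨isClosed_eq 𝒢.continuous_r 𝒢.continuous_s, 𝒢.Tmap_bijective, fun _ _ => rfl,
    fun _ _ => rfl, fun f => (𝒢.isLocallyConstant_Tmap_and_hasCompactSupport_Tmap_iff f).symm,
    fun _ _ => rfl, 𝒢.Tmap_actR, 𝒢.Tmap_convL, 𝒢.Tmap_convR⟩

/-- The set `G_ad` of loops is closed in `G`, and the formula `T(f)(α,β) = f(α, αβ)`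
defines a linear automorphism of `C_c^∞(G_ad ×_{π,r} G)` which is a bimodule map for both
the pointwise actions of `C_c^∞(G_ad)` and the left and right convolution actions of the
Steinberg algebra `C_c^∞(G)`. -/
theorem stmt_15 (G : Type) [TopologicalSpace G] [T2Space G] [LocallyCompactSpace G]
    (𝒢 : AmpleGroupoid G) :
    IsClosed {α : G | 𝒢.r α = 𝒢.s α} ∧
    Function.Bijective 𝒢.Tmap ∧
    (∀ f g : 𝒢.adPairs → ℂ, 𝒢.Tmap (f + g) = 𝒢.Tmap f + 𝒢.Tmap g) ∧
    (∀ (a : ℂ) (f : 𝒢.adPairs → ℂ), 𝒢.Tmap (a • f) = a • 𝒢.Tmap f) ∧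
    (∀ f : 𝒢.adPairs → ℂ, (IsLocallyConstant f ∧ HasCompactSupport f) ↔
        (IsLocallyConstant (𝒢.Tmap f) ∧ HasCompactSupport (𝒢.Tmap f))) ∧
    (∀ (h : G → ℂ) (f : 𝒢.adPairs → ℂ), 𝒢.Tmap (𝒢.actL h f) = 𝒢.actL h (𝒢.Tmap f)) ∧
    (∀ (h : G → ℂ) (f : 𝒢.adPairs → ℂ), 𝒢.Tmap (𝒢.actR f h) = 𝒢.actR (𝒢.Tmap f) h) ∧
    (∀ (g : G → ℂ) (f : 𝒢.adPairs → ℂ), 𝒢.Tmap (𝒢.convL g f) = 𝒢.convL g (𝒢.Tmap f)) ∧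
    (∀ (g : G → ℂ) (f : 𝒢.adPairs → ℂ), 𝒢.Tmap (𝒢.convR f g) = 𝒢.convR (𝒢.Tmap f) g) :=
  stmt_15_general G 𝒢
end

section
/- Let G be a proper ample Hausdorff groupoid with paracompact orbit space and let c : G^(0) → [0,∞) be a locally constant cut-off function. Given a left G-orbit-indexed averaging: for any compact open bisection U ⊆ G and compact open V ⊆ G^(0), the identity λ(χ_U * (c∘s · χ_V∘r)) = λ(c∘s · χ_{U·V}∘r) holds in C_c^∞(G^(0)), where U·V = r(U ∩ s⁻¹(V)), λ is the fiberwise sum λ(f)(x) = Σ_{α ∈ G^x} f(α), and * is convolution in the Steinberg algebra. -/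
/-!
Since `r` is injective on the bisection `U`, at most one `β ∈ U` has `r β = r α`, so the
convolution `(χ_U * f)(α)` collapses to the single term `f(β⁻¹α)`. For
`f = c∘s · χ_V∘r` this term is `c(s α) χ_V(s β)`, because `s(β⁻¹α) = s α` and `r(β⁻¹α) = s β`;
and such a `β` with `s β ∈ V` exists exactly when `r α ∈ r(U ∩ s⁻¹ V)`. The identity thus holds
pointwise on `G`, before applying `λ`.
-/

namespace AmpleGroupoid

variable {G : Type} [TopologicalSpace G] (𝒢 : AmpleGroupoid G)

theorem conv_indicator_one_apply_of_mem {U : Set G} (hU : Set.InjOn 𝒢.r U) (g : G → ℂ)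
    {α β : G} (hβU : β ∈ U) (hβ : 𝒢.r β = 𝒢.r α) :
    𝒢.conv (U.indicator fun _ => 1) g α = g (𝒢.mul (𝒢.inv β) α ((𝒢.s_inv β).trans hβ)) := by
  classical
  rw [conv, finsum_eq_single _ β, finsum_eq_dif, dif_pos hβ, Set.indicator_of_mem hβU, one_mul]
  intro β' hβ'
  rw [finsum_eq_dif]
  split_ifs with hβ'r
  · have hβ'U : β' ∉ U := fun hβ'U => hβ' (hU hβ'U hβU (hβ'r.trans hβ.symm))
    rw [Set.indicator_of_notMem hβ'U, zero_mul]
  · rfl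

theorem conv_indicator_one_apply_eq_zero {U : Set G} (g : G → ℂ) {α : G}
    (hα : ∀ β ∈ U, 𝒢.r β ≠ 𝒢.r α) :
    𝒢.conv (U.indicator fun _ => 1) g α = 0 := by
  classical
  refine finsum_eq_zero_of_forall_eq_zero fun β => ?_
  rw [finsum_eq_dif]
  split_ifs with hβ
  · rw [Set.indicator_of_notMem (fun hβU => hα β hβU hβ), zero_mul]
  · rfl

theorem conv_indicator_one_source_mul_range_indicator {U : Set G} (hU : Set.InjOn 𝒢.r U)
    (f : 𝒢.units → ℂ) (V : Set G) (α : G) :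
    𝒢.conv (U.indicator fun _ => 1)
        (fun γ => f ⟨𝒢.s γ, 𝒢.s_s γ⟩ * V.indicator (fun _ => 1) (𝒢.r γ)) α
      = f ⟨𝒢.s α, 𝒢.s_s α⟩ * (𝒢.r '' (U ∩ 𝒢.s ⁻¹' V)).indicator (fun _ => 1) (𝒢.r α) := by
  by_cases hα : ∃ β ∈ U, 𝒢.r β = 𝒢.r α
  · obtain ⟨β, hβU, hβ⟩ := hα
    have hmem : 𝒢.r α ∈ 𝒢.r '' (U ∩ 𝒢.s ⁻¹' V) ↔ 𝒢.s β ∈ V := by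
      refine ⟨fun ⟨β', ⟨hβ'U, hβ'V⟩, hβ'⟩ => ?_, fun hβV => ⟨β, ⟨hβU, hβV⟩, hβ⟩⟩
      rwa [← hU hβ'U hβU (hβ'.trans hβ.symm)]
    rw [conv_indicator_one_apply_of_mem 𝒢 hU _ hβU hβ]
    simp only [𝒢.s_mul]
    rw [𝒢.r_mul, 𝒢.r_inv]
    by_cases hβV : 𝒢.s β ∈ V
    · rw [Set.indicator_of_mem hβV, Set.indicator_of_mem (hmem.2 hβV)]
    · rw [Set.indicator_of_notMem hβV, Set.indicator_of_notMem (mt hmem.1 hβV)]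
  · push Not at hα
    have hnot : 𝒢.r α ∉ 𝒢.r '' (U ∩ 𝒢.s ⁻¹' V) := fun ⟨β, ⟨hβU, _⟩, hβ⟩ => hα β hβU hβ
    rw [conv_indicator_one_apply_eq_zero 𝒢 _ hα, Set.indicator_of_notMem hnot, mul_zero]

end AmpleGroupoid

theorem stmt_17_general (G : Type) [TopologicalSpace G]
    (𝒢 : AmpleGroupoid G)
    (c : 𝒢.units → ℝ)
    (U : Set G) (hUr : Set.InjOn 𝒢.r U)
    (V : Set G) :
    𝒢.lam (𝒢.conv (U.indicator fun _ => (1 : ℂ))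
        (fun α => (c ⟨𝒢.s α, 𝒢.s_s α⟩ : ℂ) * V.indicator (fun _ => (1 : ℂ)) (𝒢.r α)))
      = 𝒢.lam (fun α => (c ⟨𝒢.s α, 𝒢.s_s α⟩ : ℂ) *
          (𝒢.r '' (U ∩ 𝒢.s ⁻¹' V)).indicator (fun _ => (1 : ℂ)) (𝒢.r α)) :=
  congrArg 𝒢.lam <| funext <|
    𝒢.conv_indicator_one_source_mul_range_indicator hUr (fun x => (c x : ℂ)) V

/-- The averaging identity used to equivariantise `C_c^∞(G⁰)`-linear maps over a proper
ample groupoid with locally constant cut-off function `c`: for a compact open bisection `U`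
and a compact open `V ⊆ G⁰`,
`λ(χ_U * (c∘s · χ_V∘r)) = λ(c∘s · χ_{U·V}∘r)` in `C_c^∞(G⁰)`, where
`U·V = r(U ∩ s⁻¹(V))`. -/
theorem stmt_17 (G : Type) [TopologicalSpace G] [T2Space G] [LocallyCompactSpace G]
    (𝒢 : AmpleGroupoid G)
    (hproper : ∀ K : Set (G × G), IsCompact K → IsCompact {α : G | (𝒢.s α, 𝒢.r α) ∈ K})
    (c : 𝒢.units → ℝ) (hclc : IsLocallyConstant c) (hc0 : ∀ x, 0 ≤ c x)
    (hcfin : ∀ x : 𝒢.units, {α : G | 𝒢.r α = (x : G) ∧ c ⟨𝒢.s α, 𝒢.s_s α⟩ ≠ 0}.Finite)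
    (hcsum : ∀ x : 𝒢.units, ∑ᶠ (α : G) (_ : 𝒢.r α = (x : G)), c ⟨𝒢.s α, 𝒢.s_s α⟩ = 1)
    (hcprop : ∀ K : Set G, K ⊆ 𝒢.units → IsCompact K →
        IsCompact (closure {α : G | c ⟨𝒢.s α, 𝒢.s_s α⟩ ≠ 0} ∩ 𝒢.r ⁻¹' K))
    (U : Set G) (hUc : IsCompact U) (hUo : IsOpen U)
    (hUs : Set.InjOn 𝒢.s U) (hUr : Set.InjOn 𝒢.r U)
    (V : Set G) (hV : V ⊆ 𝒢.units) (hVc : IsCompact V) (hVo : IsOpen V) :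
    𝒢.lam (𝒢.conv (U.indicator fun _ => (1 : ℂ))
        (fun α => (c ⟨𝒢.s α, 𝒢.s_s α⟩ : ℂ) * V.indicator (fun _ => (1 : ℂ)) (𝒢.r α)))
      = 𝒢.lam (fun α => (c ⟨𝒢.s α, 𝒢.s_s α⟩ : ℂ) *
          (𝒢.r '' (U ∩ 𝒢.s ⁻¹' V)).indicator (fun _ => (1 : ℂ)) (𝒢.r α)) :=
  stmt_17_general G 𝒢 c U hUr V
end

section
/- Let R be a commutative ring which is a filtered colimit of products of copies of a field (concretely, R = C_c^∞(Q) for a totally disconnected locally compact Hausdorff space Q, with pointwise multiplication), let m_x ⊆ R be the maximal ideal of functions vanishing at a point x ∈ Q, and for an essential R-module M set M_x = M / m_x·M. Then localization at x is exact: for every short exact sequence 0 → K → E → N → 0 of essential R-modules, the induced sequence 0 → K_x → E_x → N_x → 0 is exact. -/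
variable (Q : Type) [TopologicalSpace Q]

/-- Pointwise multiplication on `C_c^∞(Q)`. -/
noncomputable def cmul (f g : Cc Q) : Cc Q :=
  ⟨(f : Q → ℂ) * (g : Q → ℂ), ⟨f.2.1.mul g.2.1, f.2.2.mul_right⟩⟩

section Modules

variable {M : Type} [AddCommGroup M] [Module ℂ M]

/-- The localising submodule `m_x · M` of an `C_c^∞(Q)`-module `(M, ρ)` at a point `x`,
spanned by the elements `ρ(f)(m)` with `f(x) = 0`. -/
noncomputable def mIdealSMul (x : Q) (ρ : Cc Q →ₗ[ℂ] M →ₗ[ℂ] M) : Submodule ℂ M :=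
  Submodule.span ℂ {y : M | ∃ (f : Cc Q) (m : M), (f : Q → ℂ) x = 0 ∧ ρ f m = y}

/-- A `C_c^∞(Q)`-module `(M, ρ)` is essential if `C_c^∞(Q)·M = M`, i.e. every element is a
finite sum of elements `ρ(f)(m)`. -/
noncomputable def IsEssentialMod (ρ : Cc Q →ₗ[ℂ] M →ₗ[ℂ] M) : Prop :=
  ∀ m : M, m ∈ AddSubgroup.closure {y : M | ∃ (f : Cc Q) (m' : M), ρ f m' = y}

end Modules

/-!
Localisation at `x` is exact on the right for formal reasons, so the content is left exactness
and exactness in the middle. Both follow from one observation: every `m ∈ m_x·M` is fixed by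
some `f ∈ m_x`. A generator `ρ(f)(m)` is fixed by the indicator of the support of `f`, which
lies in `C_c^∞(Q)` because `f` is locally constant; for a sum of two elements fixed by
`f₁` and `f₂`, the function `f₁ + f₂ - f₁f₂` fixes both. If `ι k ∈ m_x·E` is fixed by `f ∈ m_x`,
then so is `k`, by injectivity of `ι`; if `π e ∈ m_x·N` is fixed by `f`, then
`e - ρ(f)(e) ∈ ker π = im ι` while `ρ(f)(e) ∈ m_x·E`.
-/

section LocalUnits

variable {Q}

theorem cmul_comm (f g : Cc Q) : cmul Q f g = cmul Q g f :=
  Subtype.ext (mul_comm _ _)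

theorem exists_apply_eq_zero_and_cmul_eq_self (f : Cc Q) {x : Q} (hx : (f : Q → ℂ) x = 0) :
    ∃ g : Cc Q, (g : Q → ℂ) x = 0 ∧ cmul Q g f = f := by
  classical
  let u : ℂ → ℂ := fun c => if c = 0 then 0 else 1
  refine ⟨⟨u ∘ f, f.2.1.comp u, f.2.2.comp_left (if_pos rfl)⟩, if_pos hx, ?_⟩
  refine Subtype.ext (funext fun y => ?_)
  show u ((f : Q → ℂ) y) * (f : Q → ℂ) y = (f : Q → ℂ) y
  by_cases hy : (f : Q → ℂ) y = 0 <;> simp [u, hy]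

variable {M : Type} [AddCommGroup M] [Module ℂ M] {ρ : Cc Q →ₗ[ℂ] M →ₗ[ℂ] M} {x : Q}

theorem apply_mem_mIdealSMul {f : Cc Q} (hfx : (f : Q → ℂ) x = 0) (m : M) :
    ρ f m ∈ mIdealSMul Q x ρ :=
  Submodule.subset_span ⟨f, m, hfx, rfl⟩

theorem exists_apply_eq_self_of_mem_mIdealSMul
    (hρ : ∀ (f g : Cc Q) (m : M), ρ (cmul Q f g) m = ρ f (ρ g m))
    {m : M} (hm : m ∈ mIdealSMul Q x ρ) :
    ∃ f : Cc Q, (f : Q → ℂ) x = 0 ∧ ρ f m = m := by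
  induction hm using Submodule.span_induction with
  | mem y hy =>
    obtain ⟨f, m', hfx, rfl⟩ := hy
    obtain ⟨g, hgx, hgf⟩ := exists_apply_eq_zero_and_cmul_eq_self f hfx
    exact ⟨g, hgx, by rw [← hρ, hgf]⟩
  | zero => exact ⟨0, rfl, by simp⟩
  | add y z _ _ ihy ihz =>
    obtain ⟨f₁, hf₁x, hf₁⟩ := ihy
    obtain ⟨f₂, hf₂x, hf₂⟩ := ihz
    refine ⟨f₁ + f₂ - cmul Q f₁ f₂, ?_, ?_⟩
    · show (f₁ : Q → ℂ) x + (f₂ : Q → ℂ) x - (f₁ : Q → ℂ) x * (f₂ : Q → ℂ) x = 0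
      rw [hf₁x, hf₂x]; ring
    · have hy : ρ (cmul Q f₁ f₂) y = ρ f₂ y := by rw [cmul_comm, hρ, hf₁]
      have hz : ρ (cmul Q f₁ f₂) z = ρ f₁ z := by rw [hρ, hf₂]
      simp only [map_sub, map_add, LinearMap.sub_apply, LinearMap.add_apply, hy, hz, hf₁, hf₂]
      abel
  | smul c y _ ih =>
    obtain ⟨f, hfx, hf⟩ := ih
    exact ⟨f, hfx, by rw [map_smul, hf]⟩

end LocalUnits

theorem stmt_18
    (K E N : Type) [AddCommGroup K] [Module ℂ K] [AddCommGroup E] [Module ℂ E]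
    [AddCommGroup N] [Module ℂ N]
    (ρK : Cc Q →ₗ[ℂ] K →ₗ[ℂ] K) (ρE : Cc Q →ₗ[ℂ] E →ₗ[ℂ] E) (ρN : Cc Q →ₗ[ℂ] N →ₗ[ℂ] N)
    (hE : ∀ (f g : Cc Q) (m : E), ρE (cmul Q f g) m = ρE f (ρE g m))
    (hN : ∀ (f g : Cc Q) (m : N), ρN (cmul Q f g) m = ρN f (ρN g m))
    (ι : K →ₗ[ℂ] E) (π : E →ₗ[ℂ] N)
    (hι : ∀ (f : Cc Q) (k : K), ι (ρK f k) = ρE f (ι k))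
    (hπ : ∀ (f : Cc Q) (e : E), π (ρE f e) = ρN f (π e))
    (hinj : Function.Injective ι) (hsurj : Function.Surjective π)
    (hexact : LinearMap.range ι = LinearMap.ker π)
    (x : Q) :
    (∀ k : K, ι k ∈ mIdealSMul Q x ρE → k ∈ mIdealSMul Q x ρK) ∧
    (∀ e : E, π e ∈ mIdealSMul Q x ρN → ∃ k : K, e - ι k ∈ mIdealSMul Q x ρE) ∧
    (∀ n : N, ∃ e : E, n - π e ∈ mIdealSMul Q x ρN) := by
  refine ⟨fun k hk => ?_, fun e he => ?_, fun n => ?_⟩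
  · obtain ⟨f, hfx, hf⟩ := exists_apply_eq_self_of_mem_mIdealSMul hE hk
    have hfk : ρK f k = k := hinj (by rw [hι, hf])
    exact hfk ▸ apply_mem_mIdealSMul hfx k
  · obtain ⟨f, hfx, hf⟩ := exists_apply_eq_self_of_mem_mIdealSMul hN he
    have hker : e - ρE f e ∈ LinearMap.range ι := by
      rw [hexact, LinearMap.mem_ker, map_sub, hπ, hf, sub_self]
    obtain ⟨k, hk⟩ := hker
    exact ⟨k, by rw [hk, sub_sub_cancel]; exact apply_mem_mIdealSMul hfx e⟩
  · obtain ⟨e, rfl⟩ := hsurj n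
    exact ⟨e, by rw [sub_self]; exact Submodule.zero_mem _⟩
end
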